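/- arXiv:1912.02225 — 5 statements merged into one kernel-verified Lean document; each statement's English description precedes it below -/
import Mathlib

section
/- Let (X, d, μ) be a compact metric measure space and let φ ∈ L²(X, μ) be an eigenfunction of the distance kernel operator D with eigenvalue λ, i.e. Dφ = λφ, and with ‖φ‖_{L²} = 1. Then the function λφ is √(μ(X))-Lipschitz; in particular, if λ ≠ 0, then φ is (√(μ(X))/|λ|)-Lipschitz. -/
open MeasureTheory

theorem stmt2 {X : Type*} [MetricSpace X] [CompactSpace X] [MeasurableSpace X] [BorelSpace X]
    (μ : Measure X) [IsFiniteMeasure μ] (φ : X → ℝ) (l : ℝ)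
    (hmeas : Measurable φ)
    (heig : ∀ x, ∫ y, dist x y * φ y ∂μ = l * φ x)
    (hnorm : ∫ y, φ y ^ 2 ∂μ = 1) :
    (∀ x y, |l * φ x - l * φ y| ≤ Real.sqrt (μ Set.univ).toReal * dist x y) ∧
      (l ≠ 0 → ∀ x y, |φ x - φ y| ≤ Real.sqrt (μ Set.univ).toReal / |l| * dist x y) := by
  -- φ² is integrable (otherwise the integral would be 0, not 1)
  have hsq : Integrable (fun y => φ y ^ 2) μ := by
    by_contra h
    rw [integral_undef h] at hnorm
    norm_num at hnorm
  have hmem2 : MemLp φ 2 μ :=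
    (memLp_two_iff_integrable_sq hmeas.aestronglyMeasurable).2 hsq
  have hint : Integrable φ μ := hmem2.integrable (by norm_num)
  -- Cauchy–Schwarz: ∫ |φ| ≤ √(μ univ)
  have hCS : ∫ y, |φ y| ∂μ ≤ Real.sqrt (μ Set.univ).toReal := by
    have h1 : MemLp (fun _ : X => (1 : ℝ)) (ENNReal.ofReal 2) μ := memLp_const 1
    have h2 : MemLp (fun y => |φ y|) (ENNReal.ofReal 2) μ := by
      have : (ENNReal.ofReal 2) = 2 := by norm_num
      rw [this]; exact hmem2.abs
    have := integral_mul_le_Lp_mul_Lq_of_nonneg (Real.holderConjugate_iff_eq_conjExponent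
      (by norm_num) |>.2 (by norm_num)) (Filter.Eventually.of_forall fun _ => zero_le_one)
      (Filter.Eventually.of_forall fun y => abs_nonneg (φ y)) h1 h2
    simp only [one_mul] at this
    calc ∫ y, |φ y| ∂μ ≤ (∫ _, (1:ℝ) ^ (2:ℝ) ∂μ) ^ (1/(2:ℝ)) * (∫ y, |φ y| ^ (2:ℝ) ∂μ) ^ (1/(2:ℝ)) := this
      _ = Real.sqrt (μ Set.univ).toReal := by
          have e1 : ∫ _, (1:ℝ) ^ (2:ℝ) ∂μ = (μ Set.univ).toReal := by
            simp [Real.one_rpow, Measure.real]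
          have e2 : ∫ y, |φ y| ^ (2:ℝ) ∂μ = 1 := by
            rw [← hnorm]
            refine integral_congr_ae (Filter.Eventually.of_forall fun y => ?_)
            simp [Real.rpow_two, sq_abs]
          rw [e1, e2, Real.one_rpow, mul_one, ← Real.sqrt_eq_rpow]
  -- The key Lipschitz bound
  have key : ∀ x y, |l * φ x - l * φ y| ≤ Real.sqrt (μ Set.univ).toReal * dist x y := by
    intro x y
    have hbd : ∀ x : X, ∃ C, ∀ z, ‖dist x z‖ ≤ C := by
      intro x
      refine ⟨Metric.diam (Set.univ : Set X), fun z => ?_⟩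
      rw [Real.norm_of_nonneg dist_nonneg]
      exact Metric.dist_le_diam_of_mem isCompact_univ.isBounded (Set.mem_univ _)
        (Set.mem_univ _)
    have hix : ∀ x : X, Integrable (fun z => dist x z * φ z) μ := by
      intro x
      obtain ⟨C, hC⟩ := hbd x
      exact hint.bdd_mul ((continuous_const.dist continuous_id).aestronglyMeasurable) (Filter.Eventually.of_forall hC)
    have hdiff : l * φ x - l * φ y = ∫ z, (dist x z - dist y z) * φ z ∂μ := by
      rw [← heig x, ← heig y, ← integral_sub (hix x) (hix y)]
      congr 1; ext z; ring
    rw [hdiff]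
    calc |∫ z, (dist x z - dist y z) * φ z ∂μ|
        ≤ ∫ z, |(dist x z - dist y z) * φ z| ∂μ := by
          simpa [abs_mul] using
            norm_integral_le_integral_norm (μ := μ) (fun z => (dist x z - dist y z) * φ z)
      _ ≤ ∫ z, dist x y * |φ z| ∂μ := by
          refine integral_mono_of_nonneg (Filter.Eventually.of_forall fun z => abs_nonneg _)
            (hint.abs.const_mul _) (Filter.Eventually.of_forall fun z => ?_)
          dsimp only
          rw [abs_mul]
          exact mul_le_mul_of_nonneg_right (abs_dist_sub_le x y z) (abs_nonneg _)
      _ = dist x y * ∫ z, |φ z| ∂μ := integral_const_mul _ _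
      _ ≤ dist x y * Real.sqrt (μ Set.univ).toReal :=
          mul_le_mul_of_nonneg_left hCS dist_nonneg
      _ = Real.sqrt (μ Set.univ).toReal * dist x y := mul_comm _ _
  refine ⟨key, fun hl x y => ?_⟩
  have := key x y
  rw [← mul_sub, abs_mul] at this
  rw [div_mul_eq_mul_div, le_div_iff₀ (abs_pos.2 hl), mul_comm]
  linarith
end

section
/- Let (X, d, μ) be an (a,b)-standard metric measure space with threshold r > 0, i.e. μ(B(x,s)) ≥ a·s^b for all x ∈ X and all 0 < s ≤ r. Let x, y ∈ X with d(x, y) > 3s for some 0 < s ≤ r. Then ‖d_x − d_y‖_{L²(μ)} ≥ √(2a) · s^{(b/2)+1}. -/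
open MeasureTheory

theorem stmt6 {X : Type*} [MetricSpace X] [MeasurableSpace X] [BorelSpace X]
    (μ : Measure X) [IsFiniteMeasure μ] (a b r : ℝ) (ha : 0 < a) (hb : 0 < b) (hr : 0 < r)
    (hstd : ∀ (x : X) (s : ℝ), 0 < s → s ≤ r →
      ENNReal.ofReal (a * s ^ b) ≤ μ (Metric.closedBall x s))
    (x y : X) (s : ℝ) (hs : 0 < s) (hsr : s ≤ r) (hd : 3 * s < dist x y) :
    Real.sqrt (2 * a) * s ^ (b / 2 + 1) ≤
      Real.sqrt (∫ z, (dist x z - dist y z) ^ 2 ∂μ) := by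
  set f : X → ℝ := fun z => (dist x z - dist y z) ^ 2 with hfdef
  have hcont : Continuous f := by fun_prop
  have hfint : Integrable f μ := by
    refine (integrable_const ((dist x y) ^ 2)).mono' hcont.aestronglyMeasurable
      (Filter.Eventually.of_forall fun z => ?_)
    have h1 : |dist x z - dist y z| ≤ dist x y := abs_dist_sub_le x y z
    have : ‖f z‖ = |dist x z - dist y z| ^ 2 := by
      simp [hfdef, Real.norm_eq_abs, abs_pow, sq_abs]
    rw [this]
    exact pow_le_pow_left₀ (abs_nonneg _) h1 2
  set A : Set X := Metric.closedBall x s ∪ Metric.closedBall y s with hA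
  have hAmeas : MeasurableSet A :=
    (measurableSet_closedBall).union measurableSet_closedBall
  have hdisj : Disjoint (Metric.closedBall x s) (Metric.closedBall y s) := by
    rw [Set.disjoint_left]
    intro z hz hz'
    have : dist x y ≤ dist x z + dist z y := dist_triangle x z y
    rw [Metric.mem_closedBall, dist_comm] at hz hz'
    rw [dist_comm z y] at this
    linarith
  have hlow : ∀ z ∈ A, s ^ 2 ≤ f z := by
    intro z hz
    have key : s ≤ |dist x z - dist y z| := by
      rcases hz with hz | hz <;> rw [Metric.mem_closedBall, dist_comm] at hz
      · have h1 : dist x y ≤ dist x z + dist z y := dist_triangle x z y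
        rw [abs_sub_comm]
        rw [le_abs]
        left
        have := dist_comm z y
        nlinarith
      · rw [le_abs]
        left
        have h1 : dist x y ≤ dist y z + dist z x := by
          rw [dist_comm x y]; exact dist_triangle y z x
        have := dist_comm z x
        nlinarith
    calc s ^ 2 ≤ |dist x z - dist y z| ^ 2 := pow_le_pow_left₀ hs.le key 2
    _ = f z := by simp [hfdef, sq_abs]
  -- integral over indicator
  have hgint : Integrable (A.indicator fun _ => s ^ 2) μ :=
    (integrable_const (s ^ 2)).indicator hAmeas
  have hmono : ∀ z, A.indicator (fun _ => s ^ 2) z ≤ f z := by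
    intro z
    by_cases hz : z ∈ A
    · rw [Set.indicator_of_mem hz]; exact hlow z hz
    · rw [Set.indicator_of_notMem hz]; positivity
  have hint_ge : ∫ z, A.indicator (fun _ => s ^ 2) z ∂μ ≤ ∫ z, f z ∂μ :=
    integral_mono hgint hfint hmono
  have hindval : ∫ z, A.indicator (fun _ => s ^ 2) z ∂μ = s ^ 2 * (μ A).toReal := by
    rw [integral_indicator_const _ hAmeas]
    simp [mul_comm, measureReal_def]
  have hmuA : ENNReal.ofReal (2 * (a * s ^ b)) ≤ μ A := by
    have : μ A = μ (Metric.closedBall x s) + μ (Metric.closedBall y s) :=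
      measure_union hdisj measurableSet_closedBall
    rw [this, two_mul, ENNReal.ofReal_add (by positivity) (by positivity)]
    exact add_le_add (hstd x s hs hsr) (hstd y s hs hsr)
  have hmuA' : 2 * (a * s ^ b) ≤ (μ A).toReal := by
    have hfin : μ A ≠ ⊤ := measure_ne_top μ A
    rw [← ENNReal.ofReal_le_iff_le_toReal hfin] at *
    exact hmuA
  have hkey : 2 * a * s ^ (b + 2) ≤ ∫ z, f z ∂μ := by
    have h1 : s ^ (b + 2 : ℝ) = s ^ b * s ^ 2 := by
      rw [Real.rpow_add hs]
      norm_num [Real.rpow_two]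
    calc 2 * a * s ^ (b + 2) = s ^ 2 * (2 * (a * s ^ b)) := by rw [h1]; ring
    _ ≤ s ^ 2 * (μ A).toReal := by
        exact mul_le_mul_of_nonneg_left hmuA' (by positivity)
    _ = ∫ z, A.indicator (fun _ => s ^ 2) z ∂μ := hindval.symm
    _ ≤ ∫ z, f z ∂μ := hint_ge
  have hlhs : Real.sqrt (2 * a) * s ^ (b / 2 + 1) = Real.sqrt (2 * a * s ^ (b + 2)) := by
    have hsq : Real.sqrt (s ^ (b + 2 : ℝ)) = s ^ (b / 2 + 1 : ℝ) := by
      rw [Real.sqrt_eq_rpow, ← Real.rpow_mul hs.le]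
      congr 1
      ring
    rw [Real.sqrt_mul (by positivity : (0:ℝ) ≤ 2 * a) (s ^ (b + 2 : ℝ)), hsq]
  rw [hlhs]
  exact Real.sqrt_le_sqrt hkey
end

section
/- Let (X, d, μ) be a compact (a,b)-standard metric measure space with threshold r > 0, and let φ be an L²-normalized eigenfunction of the distance kernel operator with nonzero eigenvalue λ. Then ‖φ‖_∞ ≤ 1/(√a · r^{b/2}) + (r/|λ|)·√(μ(X)). -/
open MeasureTheory

theorem stmt16 {X : Type*} [MetricSpace X] [CompactSpace X] [MeasurableSpace X] [BorelSpace X]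
    (μ : Measure X) [IsFiniteMeasure μ] (a b r : ℝ)
    (ha : 0 < a) (hb : 0 < b) (hr : 0 < r)
    (hstd : ∀ (x : X) (s : ℝ), 0 < s → s ≤ r →
      ENNReal.ofReal (a * s ^ b) ≤ μ (Metric.closedBall x s))
    (φ : X → ℝ) (l : ℝ) (hl : l ≠ 0) (hmeas : Measurable φ)
    (heig : ∀ x, ∫ y, dist x y * φ y ∂μ = l * φ x)
    (hnorm : ∫ y, φ y ^ 2 ∂μ = 1) :
    ∀ x, |φ x| ≤ 1 / (Real.sqrt a * r ^ (b / 2)) +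
      r / |l| * Real.sqrt (μ Set.univ).toReal := by
  intro x
  have hl' : 0 < |l| := abs_pos.mpr hl
  -- φ² is integrable
  have hφ2 : Integrable (fun y => φ y ^ 2) μ := by
    by_contra h
    rw [integral_undef h] at hnorm
    norm_num at hnorm
  have hφL2 : MemLp φ 2 μ :=
    (memLp_two_iff_integrable_sq hmeas.aestronglyMeasurable).2 hφ2
  have hφint : Integrable φ μ := hφL2.integrable (by norm_num)
  -- bound on ∫ |φ| via Cauchy–Schwarz
  have hCS : ∫ y, |φ y| ∂μ ≤ Real.sqrt (μ Set.univ).toReal := by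
    have hpq : Real.HolderConjugate 2 2 := Real.HolderConjugate.two_two
    have h1 : MemLp (fun _ : X => (1 : ℝ)) (ENNReal.ofReal 2) μ := memLp_const 1
    have h2 : MemLp (fun y => |φ y|) (ENNReal.ofReal 2) μ := by
      have : (ENNReal.ofReal 2) = 2 := by norm_num
      rw [this]; exact hφL2.abs
    have hthis := integral_mul_le_Lp_mul_Lq_of_nonneg hpq
      (Filter.Eventually.of_forall fun y => abs_nonneg (φ y))
      (Filter.Eventually.of_forall fun _ => zero_le_one) h2 h1
    simp only [mul_one] at hthis
    have heq : (∫ y, |φ y| ^ (2 : ℝ) ∂μ) = 1 := by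
      rw [← hnorm]
      congr 1
      ext y
      rw [show ((2:ℝ)) = ((2:ℕ):ℝ) by norm_num, Real.rpow_natCast, sq_abs]
    rw [heq, Real.one_rpow, one_mul] at hthis
    calc ∫ y, |φ y| ∂μ ≤ (∫ a, (1:ℝ) ^ (2:ℝ) ∂μ) ^ ((1:ℝ) / 2) := hthis
      _ = Real.sqrt (μ Set.univ).toReal := by
          simp only [Real.one_rpow, integral_const, smul_eq_mul, mul_one]
          rw [Real.sqrt_eq_rpow]
          rfl
  have hCSnn : 0 ≤ ∫ y, |φ y| ∂μ := integral_nonneg fun y => abs_nonneg _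
  -- Lipschitz estimate
  have hlip : ∀ x' y' : X, |φ x' - φ y'| ≤ dist x' y' * (∫ y, |φ y| ∂μ) / |l| := by
    intro x' y'
    obtain ⟨C, hC⟩ : ∃ C, ∀ z w : X, dist z w ≤ C :=
      ⟨Metric.diam (Set.univ : Set X), fun z w =>
        Metric.dist_le_diam_of_mem isCompact_univ.isBounded trivial trivial⟩
    have hint : ∀ z : X, Integrable (fun y => dist z y * φ y) μ := by
      intro z
      exact hφint.bdd_mul (Continuous.aestronglyMeasurable (continuous_const.dist continuous_id))
        (Filter.Eventually.of_forall fun y => by simpa [Real.norm_eq_abs, abs_of_nonneg dist_nonneg] using hC z y)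
    have key : l * φ x' - l * φ y' = ∫ y, (dist x' y - dist y' y) * φ y ∂μ := by
      rw [← heig x', ← heig y', ← integral_sub (hint x') (hint y')]
      congr 1; ext y; ring
    have hbound : |∫ y, (dist x' y - dist y' y) * φ y ∂μ| ≤ dist x' y' * ∫ y, |φ y| ∂μ := by
      calc |∫ y, (dist x' y - dist y' y) * φ y ∂μ|
          ≤ ∫ y, |dist x' y - dist y' y| * |φ y| ∂μ := by
            simpa [Real.norm_eq_abs, abs_mul] using
              norm_integral_le_integral_norm (μ := μ)
                (fun y => (dist x' y - dist y' y) * φ y)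
        _ ≤ ∫ y, dist x' y' * |φ y| ∂μ := by
            apply integral_mono_of_nonneg
              (Filter.Eventually.of_forall fun y => by positivity)
              (hφint.abs.const_mul _)
            refine Filter.Eventually.of_forall fun y => ?_
            dsimp only
            exact mul_le_mul_of_nonneg_right (abs_dist_sub_le x' y' y) (abs_nonneg _)
        _ = dist x' y' * ∫ y, |φ y| ∂μ := integral_const_mul _ _
    have : |l| * |φ x' - φ y'| ≤ dist x' y' * ∫ y, |φ y| ∂μ := by
      rw [← abs_mul, mul_sub]
      rw [key]
      exact hbound
    rw [le_div_iff₀ hl', mul_comm]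
    exact this
  set L : ℝ := r / |l| * Real.sqrt (μ Set.univ).toReal with hL
  have hLnn : 0 ≤ L := by positivity
  have hfirst : 0 < Real.sqrt a * r ^ (b / 2) := by
    have := Real.sqrt_pos.mpr ha
    have := Real.rpow_pos_of_pos hr (b / 2)
    positivity
  rcases le_or_gt (|φ x|) L with hM | hM
  · calc |φ x| ≤ L := hM
      _ ≤ 1 / (Real.sqrt a * r ^ (b / 2)) + L := le_add_of_nonneg_left (by positivity)
  · -- main case
    set M : ℝ := |φ x| - L with hMdef
    have hMpos : 0 < M := by simp [hMdef]; linarith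
    have hball : ∀ y ∈ Metric.closedBall x r, M ≤ |φ y| := by
      intro y hy
      have hd : dist x y ≤ r := by rwa [Metric.mem_closedBall, dist_comm] at hy
      have h1 : |φ x - φ y| ≤ dist x y * (∫ z, |φ z| ∂μ) / |l| := hlip x y
      have h2 : dist x y * (∫ z, |φ z| ∂μ) / |l| ≤ L := by
        rw [hL]
        rw [div_eq_mul_inv, div_eq_mul_inv]
        calc dist x y * (∫ z, |φ z| ∂μ) * (|l|)⁻¹
            ≤ r * Real.sqrt (μ Set.univ).toReal * (|l|)⁻¹ := by
              apply mul_le_mul_of_nonneg_right _ (by positivity)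
              exact mul_le_mul hd hCS hCSnn hr.le
          _ = r * (|l|)⁻¹ * Real.sqrt (μ Set.univ).toReal := by ring
      have h3 : |φ x| - |φ y| ≤ L := le_trans (le_trans (abs_sub_abs_le_abs_sub _ _) h1) h2
      simp only [hMdef]
      linarith
    have hμball : (a * r ^ b) ≤ (μ (Metric.closedBall x r)).toReal := by
      have h := hstd x r hr le_rfl
      have := ENNReal.toReal_mono (measure_ne_top μ _) h
      rwa [ENNReal.toReal_ofReal (by positivity)] at this
    have hint1 : M ^ 2 * (μ (Metric.closedBall x r)).toReal
        ≤ ∫ y in Metric.closedBall x r, φ y ^ 2 ∂μ := by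
      rw [mul_comm]
      show μ.real (Metric.closedBall x r) • M ^ 2 ≤ _
      apply setIntegral_ge_of_const_le measurableSet_closedBall (measure_ne_top μ _)
      · intro y hy
        calc M ^ 2 ≤ |φ y| ^ 2 := by
              apply pow_le_pow_left₀ hMpos.le (hball y hy)
          _ = φ y ^ 2 := sq_abs _
      · exact hφ2.integrableOn
    have hint2 : ∫ y in Metric.closedBall x r, φ y ^ 2 ∂μ ≤ 1 := by
      rw [← hnorm]
      exact setIntegral_le_integral hφ2 (Filter.Eventually.of_forall fun y => sq_nonneg _)
    have hsq : M ^ 2 * (a * r ^ b) ≤ 1 := by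
      calc M ^ 2 * (a * r ^ b) ≤ M ^ 2 * (μ (Metric.closedBall x r)).toReal :=
            mul_le_mul_of_nonneg_left hμball (sq_nonneg _)
        _ ≤ 1 := le_trans hint1 hint2
    have harb : 0 < a * r ^ b := by
      have := Real.rpow_pos_of_pos hr b; positivity
    have hM2 : M ^ 2 ≤ 1 / (a * r ^ b) := by
      rw [le_div_iff₀ harb]; exact hsq
    have hsqrt : Real.sqrt (a * r ^ b) = Real.sqrt a * r ^ (b / 2) := by
      rw [Real.sqrt_mul ha.le]
      congr 1
      rw [Real.sqrt_eq_rpow, ← Real.rpow_mul hr.le]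
      congr 1
      ring
    have hMle : M ≤ 1 / (Real.sqrt a * r ^ (b / 2)) := by
      have h0 : M ≤ Real.sqrt (1 / (a * r ^ b)) := Real.le_sqrt_of_sq_le hM2
      rwa [one_div, Real.sqrt_inv, hsqrt, ← one_div] at h0
    simp only [hMdef] at hMle
    linarith
end

section
/- Let (X, d, μ) be a compact metric measure space with eigenfunctions φ of the distance kernel operator. Suppose there is a bound: for every c-Lipschitz function f bounded by M, the eigenfunction approximation error E(x,x') is K-Lipschitz on X×X with the ℓ²-product metric, where K is a fixed constant. If additionally X×X has (a², 2b)-standard measure with threshold r, ‖E‖_{L²(X×X)} ≤ S, and E is K-Lipschitz and nonnegative, then ‖E‖_∞ ≤ S/(a r^b) + rK. -/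
open MeasureTheory

theorem stmt17 {X : Type*} [MetricSpace X] [CompactSpace X] [MeasurableSpace X] [BorelSpace X]
    (μ : Measure X) [IsFiniteMeasure μ] (a b r K S : ℝ)
    (ha : 0 < a) (hb : 0 < b) (hr : 0 < r) (hK : 0 ≤ K) (hS : 0 ≤ S)
    (E : X × X → ℝ) (hE0 : ∀ p, 0 ≤ E p)
    (hLip : ∀ p q : X × X,
      |E p - E q| ≤ K * Real.sqrt (dist p.1 q.1 ^ 2 + dist p.2 q.2 ^ 2))
    (hstd : ∀ (p : X × X) (s : ℝ), 0 < s → s ≤ r →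
      ENNReal.ofReal (a ^ 2 * s ^ (2 * b)) ≤
        (μ.prod μ) {q : X × X | Real.sqrt (dist p.1 q.1 ^ 2 + dist p.2 q.2 ^ 2) ≤ s})
    (hL2 : Real.sqrt (∫ p, E p ^ 2 ∂(μ.prod μ)) ≤ S) :
    ∀ p, E p ≤ S / (a * r ^ b) + r * K := by
  intro p
  have hrb : 0 < r ^ b := Real.rpow_pos_of_pos hr b
  have harb : 0 < a * r ^ b := mul_pos ha hrb
  by_cases hc : E p - r * K ≤ 0
  · have : 0 ≤ S / (a * r ^ b) := div_nonneg hS harb.le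
    linarith
  push_neg at hc
  set c : ℝ := E p - r * K with hcdef
  -- E is Lipschitz hence continuous
  have hcont : Continuous E := by
    have : LipschitzWith ⟨2 * K, by positivity⟩ E := by
      apply LipschitzWith.of_dist_le_mul
      intro x y
      rw [Real.dist_eq]
      calc |E x - E y| ≤ K * Real.sqrt (dist x.1 y.1 ^ 2 + dist x.2 y.2 ^ 2) := hLip x y
        _ ≤ K * (dist x.1 y.1 + dist x.2 y.2) := by
            gcongr
            have h1 : dist x.1 y.1 ^ 2 + dist x.2 y.2 ^ 2 ≤ (dist x.1 y.1 + dist x.2 y.2) ^ 2 := by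
              nlinarith [dist_nonneg (x := x.1) (y := y.1), dist_nonneg (x := x.2) (y := y.2)]
            calc Real.sqrt (dist x.1 y.1 ^ 2 + dist x.2 y.2 ^ 2)
                ≤ Real.sqrt ((dist x.1 y.1 + dist x.2 y.2) ^ 2) := Real.sqrt_le_sqrt h1
              _ = dist x.1 y.1 + dist x.2 y.2 := Real.sqrt_sq (by positivity)
        _ ≤ K * (dist x y + dist x y) := by
            have h1 : dist x.1 y.1 ≤ dist x y := le_max_left _ _
            have h2 : dist x.2 y.2 ≤ dist x y := le_max_right _ _
            nlinarith
        _ = ↑(⟨2 * K, by positivity⟩ : NNReal) * dist x y := by push_cast; ring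
    exact this.continuous
  have hint : Integrable (fun q => E q ^ 2) (μ.prod μ) :=
    (hcont.pow 2).integrable_of_hasCompactSupport (HasCompactSupport.of_compactSpace _)
  set B : Set (X × X) := {q : X × X | Real.sqrt (dist p.1 q.1 ^ 2 + dist p.2 q.2 ^ 2) ≤ r}
    with hBdef
  have hBmeas : MeasurableSet B := by
    have hf : Continuous fun q : X × X =>
        Real.sqrt (dist p.1 q.1 ^ 2 + dist p.2 q.2 ^ 2) := by
      apply Real.continuous_sqrt.comp
      exact (((continuous_const.dist continuous_fst).pow 2).add
        ((continuous_const.dist continuous_snd).pow 2))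
    exact (isClosed_le hf continuous_const).measurableSet
  have hBμ : ENNReal.ofReal (a ^ 2 * r ^ (2 * b)) ≤ (μ.prod μ) B := hstd p r hr le_rfl
  have hBlt : (μ.prod μ) B ≠ ⊤ := measure_ne_top _ _
  have hBlow : ∀ q ∈ B, c ≤ E q := by
    intro q hq
    have h1 : E p - E q ≤ |E p - E q| := le_abs_self _
    have h2 := hLip p q
    have h3 : K * Real.sqrt (dist p.1 q.1 ^ 2 + dist p.2 q.2 ^ 2) ≤ K * r :=
      mul_le_mul_of_nonneg_left hq hK
    simp only [hcdef]
    linarith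
  have hlow : ∀ q ∈ B, c ^ 2 ≤ E q ^ 2 := by
    intro q hq
    have := hBlow q hq
    nlinarith [hE0 q]
  have key : c ^ 2 * ((μ.prod μ) B).toReal ≤ ∫ q, E q ^ 2 ∂(μ.prod μ) := by
    calc c ^ 2 * ((μ.prod μ) B).toReal ≤ ∫ q in B, E q ^ 2 ∂(μ.prod μ) :=
          setIntegral_ge_of_const_le_real hBmeas hBlt hlow hint.integrableOn
      _ ≤ ∫ q, E q ^ 2 ∂(μ.prod μ) :=
          setIntegral_le_integral hint (Filter.Eventually.of_forall fun q => by positivity)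
  have hμtoReal : a ^ 2 * r ^ (2 * b) ≤ ((μ.prod μ) B).toReal := by
    have := ENNReal.toReal_mono hBlt hBμ
    rwa [ENNReal.toReal_ofReal (by positivity)] at this
  have hrpow : r ^ (2 * b) = (r ^ b) ^ 2 := by
    rw [two_mul, Real.rpow_add hr, sq]
  have hkey2 : (c * (a * r ^ b)) ^ 2 ≤ ∫ q, E q ^ 2 ∂(μ.prod μ) := by
    calc (c * (a * r ^ b)) ^ 2 = c ^ 2 * (a ^ 2 * r ^ (2 * b)) := by rw [hrpow]; ring
      _ ≤ c ^ 2 * ((μ.prod μ) B).toReal := by nlinarith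
      _ ≤ _ := key
  have hsq : c * (a * r ^ b) ≤ S := by
    have h1 : Real.sqrt ((c * (a * r ^ b)) ^ 2) ≤ Real.sqrt (∫ q, E q ^ 2 ∂(μ.prod μ)) :=
      Real.sqrt_le_sqrt hkey2
    rw [Real.sqrt_sq (by positivity)] at h1
    linarith
  have : c ≤ S / (a * r ^ b) := (le_div_iff₀ harb).mpr hsq
  simp only [hcdef] at this
  linarith
end

section
/- Let B₁ and B₂ be finite multisets of intervals in ℝ (graded barcodes), each containing at most L intervals, with bottleneck distance δ = d_B(B₁, B₂). Define χ_j = Σ_{I ∈ B_j} (−1)^{deg(I)} 1_I for j = 1,2. Then for any p ≥ 1, ‖χ₁ − χ₂‖_{L^p} ≤ 2^{1+1/p} · L · δ^{1/p}. -/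
open MeasureTheory

private lemma rpow_le_aux {a b p : ℝ} (ha : 0 ≤ a) (hab : a ≤ b) (hp : 1 ≤ p) :
    a ^ p ≤ b ^ (p - 1) * a := by
  rcases eq_or_lt_of_le ha with h | h
  · rw [← h, Real.zero_rpow (by linarith), mul_zero]
  · have e : a ^ p = a ^ (p - 1) * a := by
      rw [← Real.rpow_one a]
      rw [show (a ^ (1:ℝ)) ^ (p - 1) * a ^ (1:ℝ) = a ^ (p-1) * a ^ (1:ℝ) by
        rw [Real.rpow_one]]
      rw [← Real.rpow_add h, Real.rpow_one]
      ring_nf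
    rw [e]
    exact mul_le_mul_of_nonneg_right
      (Real.rpow_le_rpow ha hab (by linarith)) ha

private lemma indicator_sub_abs_le {A B : Set ℝ} (t : ℝ) :
    |A.indicator (1 : ℝ → ℝ) t - B.indicator 1 t| ≤ (symmDiff A B).indicator 1 t := by
  rcases em (t ∈ A) with h1 | h1 <;> rcases em (t ∈ B) with h2 | h2 <;>
    simp [Set.indicator_apply, h1, h2, Set.mem_symmDiff]

theorem stmt18 (n₁ n₂ n₃ L : ℕ) (δ p : ℝ) (hδ : 0 ≤ δ) (hp : 1 ≤ p)
    (hL1 : n₁ + n₂ ≤ L) (hL2 : n₁ + n₃ ≤ L)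
    (I1 I2 : Fin n₁ → Set ℝ) (degI : Fin n₁ → ℕ)
    (J1 : Fin n₂ → Set ℝ) (degJ1 : Fin n₂ → ℕ)
    (J2 : Fin n₃ → Set ℝ) (degJ2 : Fin n₃ → ℕ)
    (hI1 : ∀ i, MeasurableSet (I1 i) ∧ (I1 i).OrdConnected ∧ Bornology.IsBounded (I1 i))
    (hI2 : ∀ i, MeasurableSet (I2 i) ∧ (I2 i).OrdConnected ∧ Bornology.IsBounded (I2 i))
    (hJ1 : ∀ i, MeasurableSet (J1 i) ∧ (J1 i).OrdConnected ∧ Bornology.IsBounded (J1 i))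
    (hJ2 : ∀ i, MeasurableSet (J2 i) ∧ (J2 i).OrdConnected ∧ Bornology.IsBounded (J2 i))
    (hmatch : ∀ i, volume (symmDiff (I1 i) (I2 i)) ≤ ENNReal.ofReal (2 * δ))
    (hJ1len : ∀ i, volume (J1 i) ≤ ENNReal.ofReal (2 * δ))
    (hJ2len : ∀ i, volume (J2 i) ≤ ENNReal.ofReal (2 * δ)) :
    (∫ t : ℝ, |((∑ i, (-1 : ℝ) ^ degI i * (I1 i).indicator 1 t +
              ∑ i, (-1 : ℝ) ^ degJ1 i * (J1 i).indicator 1 t) -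
            (∑ i, (-1 : ℝ) ^ degI i * (I2 i).indicator 1 t +
              ∑ i, (-1 : ℝ) ^ degJ2 i * (J2 i).indicator 1 t))| ^ p) ^ (1 / p)
      ≤ 2 ^ (1 + 1 / p) * (L : ℝ) * δ ^ (1 / p) := by
  have hp0 : 0 < p := by linarith
  rcases Nat.eq_zero_or_pos L with hL0 | hLpos
  · -- L = 0 forces all n's to be 0
    have hn1 : n₁ = 0 := by omega
    have hn2 : n₂ = 0 := by omega
    have hn3 : n₃ = 0 := by omega
    subst hn1 hn2 hn3 hL0
    simp only [Finset.univ_eq_empty, Finset.sum_empty, sub_zero, add_zero, abs_zero,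
      Real.zero_rpow (ne_of_gt hp0), integral_zero, Nat.cast_zero, mul_zero, zero_mul]
    rw [Real.zero_rpow (by positivity)]
  · have hLR : (0 : ℝ) < L := by exact_mod_cast hLpos
    set S : Fin n₁ → Set ℝ := fun i => symmDiff (I1 i) (I2 i) with hS
    set g : ℝ → ℝ := fun t => (∑ i, (S i).indicator 1 t) + (∑ i, (J1 i).indicator 1 t) +
      (∑ i, (J2 i).indicator 1 t) with hg
    have hSm : ∀ i, MeasurableSet (S i) := fun i => ((hI1 i).1).symmDiff ((hI2 i).1)
    have h2δ : (0 : ℝ) ≤ 2 * δ := by linarith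
    have hfin : ∀ {s : Set ℝ}, volume s ≤ ENNReal.ofReal (2 * δ) → volume s < ⊤ :=
      fun h => lt_of_le_of_lt h ENNReal.ofReal_lt_top
    have hint : ∀ (s : Set ℝ), MeasurableSet s → volume s ≤ ENNReal.ofReal (2 * δ) →
        Integrable (s.indicator (1 : ℝ → ℝ)) := fun s hs hv =>
      (integrable_indicator_iff hs).2 (integrableOn_const (hfin hv).ne)
    have hi1 : Integrable (fun t => ∑ i : Fin n₁, (S i).indicator (1 : ℝ → ℝ) t) :=
      integrable_finset_sum _ fun i _ => hint _ (hSm i) (hmatch i)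
    have hi2 : Integrable (fun t => ∑ i : Fin n₂, (J1 i).indicator (1 : ℝ → ℝ) t) :=
      integrable_finset_sum _ fun i _ => hint _ (hJ1 i).1 (hJ1len i)
    have hi3 : Integrable (fun t => ∑ i : Fin n₃, (J2 i).indicator (1 : ℝ → ℝ) t) :=
      integrable_finset_sum _ fun i _ => hint _ (hJ2 i).1 (hJ2len i)
    have hgint : Integrable g := (hi1.add hi2).add hi3
    -- integral of g
    have htoReal : ∀ {s : Set ℝ}, volume s ≤ ENNReal.ofReal (2 * δ) →
        (volume s).toReal ≤ 2 * δ := fun h => ENNReal.toReal_le_of_le_ofReal h2δ h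
    have hi12 : Integrable (fun t => (∑ i : Fin n₁, (S i).indicator (1 : ℝ → ℝ) t) +
        (∑ i : Fin n₂, (J1 i).indicator (1 : ℝ → ℝ) t)) := hi1.add hi2
    have ia : ∫ t, (∑ i : Fin n₁, (S i).indicator (1 : ℝ → ℝ) t)
        = ∑ i : Fin n₁, (volume (S i)).toReal := by
      rw [integral_finset_sum _ (fun i _ => hint _ (hSm i) (hmatch i))]
      exact Finset.sum_congr rfl fun i _ => integral_indicator_one (hSm i)
    have ib : ∫ t, (∑ i : Fin n₂, (J1 i).indicator (1 : ℝ → ℝ) t)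
        = ∑ i : Fin n₂, (volume (J1 i)).toReal := by
      rw [integral_finset_sum _ (fun i _ => hint _ (hJ1 i).1 (hJ1len i))]
      exact Finset.sum_congr rfl fun i _ => integral_indicator_one (hJ1 i).1
    have ic : ∫ t, (∑ i : Fin n₃, (J2 i).indicator (1 : ℝ → ℝ) t)
        = ∑ i : Fin n₃, (volume (J2 i)).toReal := by
      rw [integral_finset_sum _ (fun i _ => hint _ (hJ2 i).1 (hJ2len i))]
      exact Finset.sum_congr rfl fun i _ => integral_indicator_one (hJ2 i).1
    have h123 : ∫ t, g t = (∫ t, ((∑ i : Fin n₁, (S i).indicator (1 : ℝ → ℝ) t) +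
          (∑ i : Fin n₂, (J1 i).indicator (1 : ℝ → ℝ) t)))
        + ∫ t, (∑ i : Fin n₃, (J2 i).indicator (1 : ℝ → ℝ) t) := integral_add hi12 hi3
    have h12 : ∫ t, ((∑ i : Fin n₁, (S i).indicator (1 : ℝ → ℝ) t) +
          (∑ i : Fin n₂, (J1 i).indicator (1 : ℝ → ℝ) t))
        = (∫ t, (∑ i : Fin n₁, (S i).indicator (1 : ℝ → ℝ) t))
          + ∫ t, (∑ i : Fin n₂, (J1 i).indicator (1 : ℝ → ℝ) t) := integral_add hi1 hi2
    have hgI : ∫ t, g t ≤ (2 * L) * (2 * δ) := by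
      rw [h123, h12, ia, ib, ic]
      have h1 : (∑ i : Fin n₁, (volume (S i)).toReal) ≤ n₁ * (2 * δ) := by
        calc (∑ i : Fin n₁, (volume (S i)).toReal) ≤ ∑ _i : Fin n₁, 2 * δ :=
              Finset.sum_le_sum fun i _ => htoReal (hmatch i)
          _ = n₁ * (2 * δ) := by simp [Finset.sum_const, nsmul_eq_mul]
      have h2 : (∑ i : Fin n₂, (volume (J1 i)).toReal) ≤ n₂ * (2 * δ) := by
        calc (∑ i : Fin n₂, (volume (J1 i)).toReal) ≤ ∑ _i : Fin n₂, 2 * δ :=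
              Finset.sum_le_sum fun i _ => htoReal (hJ1len i)
          _ = n₂ * (2 * δ) := by simp [Finset.sum_const, nsmul_eq_mul]
      have h3 : (∑ i : Fin n₃, (volume (J2 i)).toReal) ≤ n₃ * (2 * δ) := by
        calc (∑ i : Fin n₃, (volume (J2 i)).toReal) ≤ ∑ _i : Fin n₃, 2 * δ :=
              Finset.sum_le_sum fun i _ => htoReal (hJ2len i)
          _ = n₃ * (2 * δ) := by simp [Finset.sum_const, nsmul_eq_mul]
      have hn : (n₁ : ℝ) + n₂ + n₃ ≤ 2 * L := by
        have : n₁ + n₂ + n₃ ≤ 2 * L := by omega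
        exact_mod_cast this
      nlinarith
    -- pointwise bound
    have hgle : ∀ t, g t ≤ 2 * L := by
      intro t
      have h1 : (∑ i : Fin n₁, (S i).indicator (1 : ℝ → ℝ) t) ≤ (n₁ : ℝ) := by
        calc (∑ i : Fin n₁, (S i).indicator (1 : ℝ → ℝ) t) ≤ ∑ _i : Fin n₁, (1 : ℝ) :=
              Finset.sum_le_sum fun i _ => by
                by_cases h : t ∈ S i <;> simp [Set.indicator_apply, h]
          _ = n₁ := by simp
      have h2 : (∑ i : Fin n₂, (J1 i).indicator (1 : ℝ → ℝ) t) ≤ (n₂ : ℝ) := by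
        calc (∑ i : Fin n₂, (J1 i).indicator (1 : ℝ → ℝ) t) ≤ ∑ _i : Fin n₂, (1 : ℝ) :=
              Finset.sum_le_sum fun i _ => by
                by_cases h : t ∈ J1 i <;> simp [Set.indicator_apply, h]
          _ = n₂ := by simp
      have h3 : (∑ i : Fin n₃, (J2 i).indicator (1 : ℝ → ℝ) t) ≤ (n₃ : ℝ) := by
        calc (∑ i : Fin n₃, (J2 i).indicator (1 : ℝ → ℝ) t) ≤ ∑ _i : Fin n₃, (1 : ℝ) :=
              Finset.sum_le_sum fun i _ => by
                by_cases h : t ∈ J2 i <;> simp [Set.indicator_apply, h]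
          _ = n₃ := by simp
      have hn : (n₁ : ℝ) + n₂ + n₃ ≤ 2 * L := by
        have : n₁ + n₂ + n₃ ≤ 2 * L := by omega
        exact_mod_cast this
      simp only [hg]
      linarith
    have hgnn : ∀ t, 0 ≤ g t := by
      intro t
      refine add_nonneg (add_nonneg ?_ ?_) ?_ <;>
        exact Finset.sum_nonneg fun i _ => Set.indicator_nonneg (fun _ _ => zero_le_one) t
    set f : ℝ → ℝ := fun t => ((∑ i, (-1 : ℝ) ^ degI i * (I1 i).indicator 1 t +
              ∑ i, (-1 : ℝ) ^ degJ1 i * (J1 i).indicator 1 t) -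
            (∑ i, (-1 : ℝ) ^ degI i * (I2 i).indicator 1 t +
              ∑ i, (-1 : ℝ) ^ degJ2 i * (J2 i).indicator 1 t)) with hf
    have hfg : ∀ t, |f t| ≤ g t := by
      intro t
      have hre : f t = (∑ i, (-1 : ℝ) ^ degI i * ((I1 i).indicator 1 t - (I2 i).indicator 1 t))
          + ((∑ i, (-1 : ℝ) ^ degJ1 i * (J1 i).indicator 1 t)
            - (∑ i, (-1 : ℝ) ^ degJ2 i * (J2 i).indicator 1 t)) := by
        rw [hf]
        rw [show (∑ i, (-1 : ℝ) ^ degI i * ((I1 i).indicator 1 t - (I2 i).indicator 1 t))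
            = ∑ i, ((-1 : ℝ) ^ degI i * (I1 i).indicator 1 t
              - (-1 : ℝ) ^ degI i * (I2 i).indicator 1 t) from
          Finset.sum_congr rfl fun i _ => by ring, Finset.sum_sub_distrib]
        ring
      rw [hre]
      have habs : ∀ (k : ℕ) (x : ℝ), |(-1 : ℝ) ^ k * x| = |x| := by
        intro k x; rw [abs_mul, abs_pow, abs_neg, abs_one, one_pow, one_mul]
      calc |(∑ i, (-1 : ℝ) ^ degI i * ((I1 i).indicator 1 t - (I2 i).indicator 1 t))
          + ((∑ i, (-1 : ℝ) ^ degJ1 i * (J1 i).indicator 1 t)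
            - (∑ i, (-1 : ℝ) ^ degJ2 i * (J2 i).indicator 1 t))|
          ≤ |∑ i, (-1 : ℝ) ^ degI i * ((I1 i).indicator 1 t - (I2 i).indicator 1 t)|
            + (|∑ i, (-1 : ℝ) ^ degJ1 i * (J1 i).indicator 1 t|
              + |∑ i, (-1 : ℝ) ^ degJ2 i * (J2 i).indicator 1 t|) := by
            exact (abs_add_le _ _).trans (add_le_add_right (abs_sub _ _) _)
        _ ≤ (∑ i, |(-1 : ℝ) ^ degI i * ((I1 i).indicator 1 t - (I2 i).indicator 1 t)|)
            + ((∑ i, |(-1 : ℝ) ^ degJ1 i * (J1 i).indicator 1 t|)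
              + (∑ i, |(-1 : ℝ) ^ degJ2 i * (J2 i).indicator 1 t|)) := by
            gcongr <;> exact Finset.abs_sum_le_sum_abs _ _
        _ ≤ g t := by
            have hgt : g t = (∑ i : Fin n₁, (S i).indicator (1 : ℝ → ℝ) t)
                + (∑ i : Fin n₂, (J1 i).indicator (1 : ℝ → ℝ) t)
                + (∑ i : Fin n₃, (J2 i).indicator (1 : ℝ → ℝ) t) := rfl
            have e1 : (∑ i, |(-1 : ℝ) ^ degI i * ((I1 i).indicator 1 t - (I2 i).indicator 1 t)|)
                ≤ ∑ i, (S i).indicator (1 : ℝ → ℝ) t :=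
              Finset.sum_le_sum fun i _ => by
                rw [habs]; exact indicator_sub_abs_le t
            have e2 : (∑ i, |(-1 : ℝ) ^ degJ1 i * (J1 i).indicator 1 t|)
                ≤ ∑ i, (J1 i).indicator (1 : ℝ → ℝ) t :=
              Finset.sum_le_sum fun i _ => by
                rw [habs]
                exact le_of_eq (abs_of_nonneg (Set.indicator_nonneg (fun _ _ => zero_le_one) t))
            have e3 : (∑ i, |(-1 : ℝ) ^ degJ2 i * (J2 i).indicator 1 t|)
                ≤ ∑ i, (J2 i).indicator (1 : ℝ → ℝ) t :=
              Finset.sum_le_sum fun i _ => by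
                rw [habs]
                exact le_of_eq (abs_of_nonneg (Set.indicator_nonneg (fun _ _ => zero_le_one) t))
            linarith
    -- integral bound
    have h2L : (0 : ℝ) < 2 * L := by linarith
    have hpow : ∀ t, |f t| ^ p ≤ (2 * L) ^ (p - 1) * g t := by
      intro t
      calc |f t| ^ p ≤ (2 * (L : ℝ)) ^ (p - 1) * |f t| :=
            rpow_le_aux (abs_nonneg _) ((hfg t).trans (hgle t)) hp
        _ ≤ (2 * L) ^ (p - 1) * g t :=
            mul_le_mul_of_nonneg_left (hfg t) (Real.rpow_nonneg (by linarith) _)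
    have hIle : ∫ t, |f t| ^ p ≤ (2 * L) ^ (p - 1) * ((2 * L) * (2 * δ)) := by
      calc ∫ t, |f t| ^ p ≤ ∫ t, (2 * L) ^ (p - 1) * g t := by
            refine integral_mono_of_nonneg ?_ (hgint.const_mul _) ?_
            · exact Filter.Eventually.of_forall fun t =>
                Real.rpow_nonneg (abs_nonneg _) _
            · exact Filter.Eventually.of_forall hpow
        _ = (2 * L) ^ (p - 1) * ∫ t, g t := integral_const_mul _ _
        _ ≤ (2 * L) ^ (p - 1) * ((2 * L) * (2 * δ)) :=
            mul_le_mul_of_nonneg_left hgI (Real.rpow_nonneg (by linarith) _)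
    have hfinal : ((2 * (L : ℝ)) ^ (p - 1) * ((2 * L) * (2 * δ))) ^ (1 / p)
        = 2 ^ (1 + 1 / p) * (L : ℝ) * δ ^ (1 / p) := by
      have e0 : (2 * (L : ℝ)) ^ (p - 1) * (2 * L) = (2 * L) ^ p := by
        calc (2 * (L : ℝ)) ^ (p - 1) * (2 * L)
            = (2 * (L : ℝ)) ^ (p - 1) * (2 * L) ^ (1 : ℝ) := by rw [Real.rpow_one]
          _ = (2 * (L : ℝ)) ^ ((p - 1) + 1) := (Real.rpow_add h2L _ _).symm
          _ = (2 * L) ^ p := by norm_num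
      have e1 : (2 * (L : ℝ)) ^ (p - 1) * ((2 * L) * (2 * δ))
          = (2 * L) ^ p * (2 * δ) := by rw [← e0]; ring
      rw [e1, Real.mul_rpow (Real.rpow_nonneg h2L.le p) h2δ,
        ← Real.rpow_mul h2L.le, mul_one_div_cancel (ne_of_gt hp0),
        Real.rpow_one, Real.mul_rpow (by norm_num : (0:ℝ) ≤ 2) hδ,
        Real.rpow_add (by norm_num : (0:ℝ) < 2), Real.rpow_one]
      ring
    calc (∫ t, |f t| ^ p) ^ (1 / p)
        ≤ ((2 * (L : ℝ)) ^ (p - 1) * ((2 * L) * (2 * δ))) ^ (1 / p) :=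
          Real.rpow_le_rpow (integral_nonneg fun t => Real.rpow_nonneg (abs_nonneg _) _)
            hIle (by positivity)
      _ = 2 ^ (1 + 1 / p) * (L : ℝ) * δ ^ (1 / p) := hfinal
end
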